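/- arXiv:1702.07118 — 3 statements merged into one kernel-verified Lean document; each statement's English description precedes it below -/
import Mathlib

section
/- Let p(x|μ,σ) = (σ/(4π sinh σ)) exp(σ⟨x,μ⟩) be the von Mises–Fisher density on S². For every unit vector μ, every σ > 0, and every vector v ∈ ℝ³ orthogonal to μ, the cross term ∫_{S²} (⟨x,μ⟩ − (coth σ − 1/σ)) · σ⟨x,v⟩ · p(x|μ,σ) dA(x) equals 0. (This is the vanishing of the mixed dσ·dμ component of the Rao–Fisher metric, which makes the metric of Example 2 a warped metric of the form (1).) -/
open MeasureTheory Real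
open scoped RealInnerProductSpace

/-! The reflection in the hyperplane orthogonal to `v` preserves the sphere, its Hausdorff
measure and `⟪x, μ⟫`, but negates `⟪x, v⟫`; hence it negates the integrand, whose integral
must therefore vanish. -/

theorem MeasureTheory.MeasurePreserving.setIntegral_eq_zero_of_comp_eq_neg {α : Type*}
    [MeasurableSpace α] {m : Measure α} {R : α → α} (hR : MeasurePreserving R m m)
    (hRe : MeasurableEmbedding R) {s : Set α} (hs : R ⁻¹' s = s) {f : α → ℝ}
    (hf : ∀ x, f (R x) = -f x) : ∫ x in s, f x ∂m = 0 := by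
  have h := hR.setIntegral_preimage_emb hRe f s
  simp only [hs, hf, integral_neg] at h
  linarith

section

variable {E : Type*} [NormedAddCommGroup E] [InnerProductSpace ℝ E]

theorem Submodule.inner_reflection_left (K : Submodule ℝ E) [K.HasOrthogonalProjection]
    (x y : E) : ⟪K.reflection x, y⟫ = ⟪x, K.reflection y⟫ := by
  rw [← K.reflection.inner_map_map, reflection_reflection]

theorem inner_reflection_orthogonalComplement_singleton_self (v x : E) :
    ⟪(ℝ ∙ v)ᗮ.reflection x, v⟫ = -⟪x, v⟫ := by
  rw [Submodule.inner_reflection_left,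
    Submodule.reflection_orthogonalComplement_singleton_eq_neg, inner_neg_right]

theorem inner_reflection_orthogonalComplement_singleton_of_inner_eq_zero {v w : E}
    (hv : ⟪v, w⟫ = 0) (x : E) : ⟪(ℝ ∙ v)ᗮ.reflection x, w⟫ = ⟪x, w⟫ := by
  rw [Submodule.inner_reflection_left, Submodule.reflection_mem_subspace_eq_self]
  rwa [Submodule.mem_orthogonal_singleton_iff_inner_right]

variable [MeasurableSpace E] [BorelSpace E]

theorem setIntegral_sphere_mul_inner_eq_zero (g : ℝ → ℝ) {v w : E} (hv : ⟪v, w⟫ = 0)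
    (r d : ℝ) : ∫ x in Metric.sphere (0 : E) r, g ⟪x, w⟫ * ⟪x, v⟫ ∂μH[d] = 0 := by
  set R := (ℝ ∙ v)ᗮ.reflection
  refine (R.toIsometryEquiv.measurePreserving_hausdorffMeasure d)
    |>.setIntegral_eq_zero_of_comp_eq_neg R.toHomeomorph.measurableEmbedding ?_ fun x => ?_
  · simp [R]
  · change g ⟪R x, w⟫ * ⟪R x, v⟫ = _
    rw [inner_reflection_orthogonalComplement_singleton_of_inner_eq_zero hv,
      inner_reflection_orthogonalComplement_singleton_self, mul_neg]

end

theorem vonMisesFisher_mixed_term_vanishes_general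
    (μ : EuclideanSpace ℝ (Fin 3)) (σ : ℝ)
    (v : EuclideanSpace ℝ (Fin 3)) (hv : ⟪v, μ⟫ = 0) :
    (∫ x in Metric.sphere (0 : EuclideanSpace ℝ (Fin 3)) 1,
        (⟪x, μ⟫ - (Real.cosh σ / Real.sinh σ - 1 / σ)) * (σ * ⟪x, v⟫)
          * (σ / (4 * π * Real.sinh σ) * Real.exp (σ * ⟪x, μ⟫)) ∂(μH[2])) = 0 := by
  have h := setIntegral_sphere_mul_inner_eq_zero
    (fun t => σ * (t - (Real.cosh σ / Real.sinh σ - 1 / σ))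
      * (σ / (4 * π * Real.sinh σ) * Real.exp (σ * t))) hv 1 2
  rw [← h]
  congr 1 with x
  ring

/-- For the von Mises–Fisher density `p(x|μ,σ) = (σ/(4π sinh σ)) exp(σ⟪x,μ⟫)` on the unit
sphere `S² ⊂ ℝ³`, and any vector `v` orthogonal to the mean direction `μ`, the mixed
`dσ·dμ` component of the Rao–Fisher metric vanishes:
`E[(∂_σ log p)(∂_v log p)] = E[(⟪x,μ⟫ - (coth σ - 1/σ)) σ⟪x,v⟫] = 0`. -/
theorem vonMisesFisher_mixed_term_vanishes
    (μ : EuclideanSpace ℝ (Fin 3)) (hμ : ‖μ‖ = 1) (σ : ℝ) (hσ : 0 < σ)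
    (v : EuclideanSpace ℝ (Fin 3)) (hv : ⟪v, μ⟫ = 0) :
    (∫ x in Metric.sphere (0 : EuclideanSpace ℝ (Fin 3)) 1,
        (⟪x, μ⟫ - (Real.cosh σ / Real.sinh σ - 1 / σ)) * (σ * ⟪x, v⟫)
          * (σ / (4 * π * Real.sinh σ) * Real.exp (σ * ⟪x, μ⟫)) ∂(μH[2])) = 0 :=
  vonMisesFisher_mixed_term_vanishes_general μ σ v hv
end

section
/- Define I₀(σ) = 1/σ² − 1/sinh²(σ) and I₁(σ) = σ coth(σ) − 1 for σ > 0, so that I₁′(σ) = coth(σ) − σ/sinh²(σ). Then for every σ > 0, (I₁′(σ))² > 4 I₀(σ) I₁(σ). (Equivalently, the extrinsic sectional curvature K|_σ = 1/I₁ − (1/4)(∂_r I₁ / I₁)² of each sphere S²×{σ} in the von Mises–Fisher statistical manifold, with ∂_r = I₀^{-1/2} ∂_σ, is strictly negative for σ > 0 — Eq. (13) obtained from the Gauss equation (11) with K^{S²} = 1.) -/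
/-!
Clearing denominators, the difference of the two sides is the perfect square
`((σ sinh σ cosh σ + σ² - 2 sinh² σ) / (σ sinh² σ))²`, a polynomial identity in `σ`,
`sinh σ` and `cosh σ`, so it suffices that its numerator is positive. With `y = 2σ` the
numerator is `(y sinh y + y² + 4 - 4 cosh y) / 4`. This function vanishes at `0`, and so does
each function in the chain of its derivatives `y cosh y + 2y - 3 sinh y`,
`y sinh y + 2 - 2 cosh y`, `y cosh y - sinh y`, which ends at `y sinh y > 0`; positivity
propagates back up the chain.
-/

open Real

lemma pos_of_hasDerivAt_of_map_zero {f f' : ℝ → ℝ} (hf : ∀ x, HasDerivAt f (f' x) x)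
    (hf' : ∀ x, 0 < x → 0 < f' x) (h₀ : f 0 = 0) {x : ℝ} (hx : 0 < x) : 0 < f x := by
  have hmono : StrictMonoOn f (Set.Ici 0) := by
    refine strictMonoOn_of_hasDerivWithinAt_pos (convex_Ici 0)
      (fun y _ ↦ (hf y).continuousAt.continuousWithinAt) (fun y _ ↦ (hf y).hasDerivWithinAt) ?_
    rw [interior_Ici]
    exact hf'
  simpa [h₀] using hmono Set.self_mem_Ici hx.le hx

lemma mul_cosh_sub_sinh_pos {y : ℝ} (hy : 0 < y) : 0 < y * cosh y - sinh y := by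
  refine pos_of_hasDerivAt_of_map_zero (f := fun y ↦ y * cosh y - sinh y)
    (f' := fun y ↦ y * sinh y) (fun x ↦ ?_) (fun x hx ↦ ?_) (by simp) hy
  · exact (((hasDerivAt_id' x).mul (hasDerivAt_cosh x)).sub (hasDerivAt_sinh x)).congr_deriv
      (by ring)
  · exact mul_pos hx (sinh_pos_iff.2 hx)

lemma mul_sinh_add_two_sub_two_mul_cosh_pos {y : ℝ} (hy : 0 < y) :
    0 < y * sinh y + 2 - 2 * cosh y := by
  refine pos_of_hasDerivAt_of_map_zero (f := fun y ↦ y * sinh y + 2 - 2 * cosh y)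
    (fun x ↦ ?_) (fun x ↦ mul_cosh_sub_sinh_pos) (by simp) hy
  exact ((((hasDerivAt_id' x).mul (hasDerivAt_sinh x)).add_const 2).sub
    ((hasDerivAt_cosh x).const_mul 2)).congr_deriv (by ring)

lemma mul_cosh_add_two_mul_sub_three_mul_sinh_pos {y : ℝ} (hy : 0 < y) :
    0 < y * cosh y + 2 * y - 3 * sinh y := by
  refine pos_of_hasDerivAt_of_map_zero (f := fun y ↦ y * cosh y + 2 * y - 3 * sinh y)
    (fun x ↦ ?_) (fun x ↦ mul_sinh_add_two_sub_two_mul_cosh_pos) (by simp) hy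
  exact ((((hasDerivAt_id' x).mul (hasDerivAt_cosh x)).add ((hasDerivAt_id' x).const_mul 2)).sub
    ((hasDerivAt_sinh x).const_mul 3)).congr_deriv (by ring)

lemma mul_sinh_add_sq_add_four_sub_four_mul_cosh_pos {y : ℝ} (hy : 0 < y) :
    0 < y * sinh y + y ^ 2 + 4 - 4 * cosh y := by
  refine pos_of_hasDerivAt_of_map_zero (f := fun y ↦ y * sinh y + y ^ 2 + 4 - 4 * cosh y)
    (fun x ↦ ?_) (fun x ↦ mul_cosh_add_two_mul_sub_three_mul_sinh_pos) (by simp) hy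
  exact (((((hasDerivAt_id' x).mul (hasDerivAt_sinh x)).add (hasDerivAt_pow 2 x)).add_const 4).sub
    ((hasDerivAt_cosh x).const_mul 4)).congr_deriv (by ring)

lemma mul_cosh_mul_sinh_add_sq_sub_two_mul_sinh_sq_pos {σ : ℝ} (hσ : 0 < σ) :
    0 < σ * cosh σ * sinh σ + σ ^ 2 - 2 * sinh σ ^ 2 := by
  have h := mul_sinh_add_sq_add_four_sub_four_mul_cosh_pos (mul_pos two_pos hσ)
  rw [sinh_two_mul, cosh_two_mul, cosh_sq] at h
  linarith

lemma vonMisesFisher_discriminant_eq_sq {σ s c : ℝ} (hσ : σ ≠ 0) (hs : s ≠ 0) :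
    (c / s - σ / s ^ 2) ^ 2 - 4 * (1 / σ ^ 2 - 1 / s ^ 2) * (σ * (c / s) - 1)
      = ((σ * c * s + σ ^ 2 - 2 * s ^ 2) / (σ * s ^ 2)) ^ 2 := by
  field_simp
  ring

/-- Strict negativity of the extrinsic sectional curvature
`K|_σ = 1/I₁ - (1/4)(∂_r I₁ / I₁)²` (with `∂_r = I₀^{-1/2} ∂_σ`) of each sphere
`S² × {σ}` of the von Mises–Fisher statistical manifold: with
`I₀(σ) = 1/σ² - 1/sinh² σ`, `I₁(σ) = σ coth σ - 1` and
`I₁'(σ) = coth σ - σ/sinh² σ`, one has `(I₁'(σ))² > 4 I₀(σ) I₁(σ)` for every `σ > 0`. -/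
theorem vonMisesFisher_extrinsic_curvature_negative (σ : ℝ) (hσ : 0 < σ) :
    (Real.cosh σ / Real.sinh σ - σ / Real.sinh σ ^ 2) ^ 2
      > 4 * (1 / σ ^ 2 - 1 / Real.sinh σ ^ 2) * (σ * (Real.cosh σ / Real.sinh σ) - 1) := by
  have hnum := mul_cosh_mul_sinh_add_sq_sub_two_mul_sinh_sq_pos hσ
  have hsinh := sinh_pos_iff.2 hσ
  have hden : 0 < σ * sinh σ ^ 2 := by positivity
  rw [gt_iff_lt, ← sub_pos, vonMisesFisher_discriminant_eq_sq hσ.ne' hsinh.ne']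
  exact pow_pos (div_pos hnum hden) 2
end

section
/- The integral ∫₁^∞ √(1/σ² − 1/sinh²(σ)) dσ diverges (equals +∞). (This is the second completeness condition of Remark i, which holds for the von Mises–Fisher model: a geodesic cannot escape to σ = ∞ within a finite time.) -/
/-!
For `σ ≥ 6` we have `sinh σ ≥ 2σ`, so `1/σ² - 1/sinh² σ ≥ 1/σ² - 1/(4σ²) ≥ 1/(4σ²)`:
the integrand dominates `1/(2σ)`, whose integral over `(6, ∞)` diverges logarithmically.
-/

open Real MeasureTheory Set

theorem Real.two_mul_le_sinh {x : ℝ} (hx : 6 ≤ x) : 2 * x ≤ sinh x := by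
  -- `2 sinh x ≥ exp x - 1 ≥ x + x²/2`
  have hexp := quadratic_le_exp_of_nonneg (by linarith : (0 : ℝ) ≤ x)
  have hexp_neg : exp (-x) ≤ 1 := exp_le_one_iff.mpr (by linarith)
  rw [sinh_eq]
  nlinarith

theorem lintegral_ofReal_div_Ioi_eq_top {a c : ℝ} (hc : 0 < c) :
    ∫⁻ x in Ioi a, ENNReal.ofReal (c / x) = ⊤ := by
  refine top_unique ((le_of_eq ?_).trans (lintegral_mono_set (Ioi_subset_Ioi (le_max_left a 0))))
  by_contra h
  have hnonneg : 0 ≤ᵐ[volume.restrict (Ioi (max a 0))] fun x ↦ c / x := by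
    filter_upwards [ae_restrict_mem measurableSet_Ioi] with x hx
    exact div_nonneg hc.le ((le_max_right a 0).trans hx.le)
  have hint : IntegrableOn (fun x ↦ c / x) (Ioi (max a 0)) :=
    (lintegral_ofReal_ne_top_iff_integrable (by fun_prop) hnonneg).mp (Ne.symm h)
  refine not_integrableOn_Ioi_inv (IntegrableOn.congr_fun (hint.const_mul c⁻¹) (fun x _ ↦ ?_)
    measurableSet_Ioi)
  field_simp

theorem inv_two_mul_le_sqrt_inv_sq_sub_inv_sinh_sq {x : ℝ} (hx : 6 ≤ x) :
    (2 * x)⁻¹ ≤ √(1 / x ^ 2 - 1 / sinh x ^ 2) := by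
  have hx0 : 0 < x := by linarith
  have hsinh : 1 / sinh x ^ 2 ≤ 1 / (2 * x) ^ 2 :=
    one_div_le_one_div_of_le (by positivity)
      (pow_le_pow_left₀ (by positivity) (two_mul_le_sinh hx) 2)
  have hgap : 1 / x ^ 2 - 1 / (2 * x) ^ 2 - (2 * x)⁻¹ ^ 2 = (2 * x ^ 2)⁻¹ := by
    field_simp; ring
  rw [le_sqrt' (by positivity)]
  linarith [inv_pos.mpr (by positivity : 0 < 2 * x ^ 2)]

/-- The second completeness condition holds for the von Mises–Fisher model: the integral
`∫₁^∞ √(I₀(σ)) dσ`, with `I₀(σ) = 1/σ² - 1/sinh² σ`, diverges, so a geodesic cannot reach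
`σ = ∞` within a finite time. -/
theorem vonMisesFisher_sqrtI₀_integral_diverges_at_infinity :
    (∫⁻ σ in Set.Ioi (1 : ℝ),
        ENNReal.ofReal (Real.sqrt (1 / σ ^ 2 - 1 / Real.sinh σ ^ 2))) = ⊤ := by
  refine top_unique (le_trans ?_
    (lintegral_mono_set (Ioi_subset_Ioi (by norm_num : (1 : ℝ) ≤ 6))))
  calc ⊤ = ∫⁻ σ in Ioi (6 : ℝ), ENNReal.ofReal (2⁻¹ / σ) :=
        (lintegral_ofReal_div_Ioi_eq_top (by norm_num)).symm
    _ = ∫⁻ σ in Ioi (6 : ℝ), ENNReal.ofReal (2 * σ)⁻¹ := by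
        simp_rw [mul_inv, div_eq_mul_inv]
    _ ≤ _ := setLIntegral_mono' measurableSet_Ioi fun σ hσ ↦
        ENNReal.ofReal_le_ofReal (inv_two_mul_le_sqrt_inv_sq_sub_inv_sinh_sq (le_of_lt hσ))
end
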